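/- Let G be a finite simple graph and R ⊆ V(G). Then R is a triconnected region of G if and only if the torso G⟦R⟧ is 3-connected, G⟦R⟧ is a topological subgraph of G, and every connected component C of G − R satisfies |N(V(C))| ≤ 2. -/

import Mathlib

variable {V : Type*} {W : Type*}

/-- A separation (Y,S,Z) of a graph: pairwise disjoint sets covering the vertex set,
with no edge between Y and Z. -/
def IsSeparation (G : SimpleGraph V) (Y S Z : Set V) : Prop :=
  Disjoint Y S ∧ Disjoint Y Z ∧ Disjoint S Z ∧ Y ∪ S ∪ Z = Set.univ ∧
    ∀ y ∈ Y, ∀ z ∈ Z, ¬ G.Adj y z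

/-- `G` is `k`-connected: more than `k` vertices and no proper separation of order `< k`. -/
def KConnected (k : ℕ) (G : SimpleGraph V) : Prop :=
  k < Nat.card V ∧
    ∀ Y S Z : Set V, IsSeparation G Y S Z → Y.Nonempty → Z.Nonempty → k ≤ S.ncard

/-- `G` is quasi-4-connected. -/
def Quasi4Connected (G : SimpleGraph V) : Prop :=
  KConnected 3 G ∧
    ∀ Y S Z : Set V, IsSeparation G Y S Z → S.ncard = 3 → Y.ncard ≤ 1 ∨ Z.ncard ≤ 1

/-- `T` is a `G`-tangle of order `k`. -/
def IsTangle (G : SimpleGraph V) (k : ℕ) (T : Set (Set V × Set V × Set V)) : Prop :=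
  (∀ p ∈ T, IsSeparation G p.1 p.2.1 p.2.2 ∧ p.2.1.ncard < k) ∧
  (∀ Y S Z : Set V, IsSeparation G Y S Z → S.ncard < k →
    (Y, S, Z) ∈ T ∨ (Z, S, Y) ∈ T) ∧
  (∀ p₁ ∈ T, ∀ p₂ ∈ T, ∀ p₃ ∈ T,
    (p₁.2.2 ∩ p₂.2.2 ∩ p₃.2.2 : Set V).Nonempty ∨
      ∃ u v : V, G.Adj u v ∧ (u ∈ p₁.2.2 ∨ v ∈ p₁.2.2) ∧
        (u ∈ p₂.2.2 ∨ v ∈ p₂.2.2) ∧ (u ∈ p₃.2.2 ∨ v ∈ p₃.2.2)) ∧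
  (∀ p ∈ T, (p.2.2 : Set V).Nonempty)

/-- The order `⪯` on separations: (Y,S,Z) ⪯ (Y',S',Z') iff S ∪ Z ⊊ S' ∪ Z', or
S ∪ Z = S' ∪ Z' and S ⊆ S'. -/
def SepLE (p q : Set V × Set V × Set V) : Prop :=
  p.2.1 ∪ p.2.2 ⊂ q.2.1 ∪ q.2.2 ∨
    (p.2.1 ∪ p.2.2 = q.2.1 ∪ q.2.2 ∧ p.2.1 ⊆ q.2.1)

/-- `p` is a `⪯`-minimal element of `T`. -/
def IsMinimalIn (T : Set (Set V × Set V × Set V)) (p : Set V × Set V × Set V) : Prop :=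
  p ∈ T ∧ ∀ q ∈ T, SepLE q p → q = p

/-- Two separations are orthogonal. (They cross if they are not orthogonal.) -/
def SepOrthogonal (p q : Set V × Set V × Set V) : Prop :=
  (p.1 ∪ p.2.1) ∩ (q.1 ∪ q.2.1) ⊆ p.2.1 ∩ q.2.1

/-- A separation (Y,S,Z) is degenerate: |Y| = 1 and S is an independent set. -/
def Degenerate (G : SimpleGraph V) (Y S Z : Set V) : Prop :=
  Y.ncard = 1 ∧ ∀ u ∈ S, ∀ v ∈ S, ¬ G.Adj u v

/-- The neighbourhood N(X): vertices outside X adjacent to a vertex of X. -/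
def Nbhd (G : SimpleGraph V) (X : Set V) : Set V :=
  {v | v ∉ X ∧ ∃ u ∈ X, G.Adj u v}

/-- `C` is (the vertex set of) a connected component of `G − X`. -/
def IsCompOutside (G : SimpleGraph V) (X C : Set V) : Prop :=
  C ⊆ Xᶜ ∧ (G.induce C).Connected ∧ ∀ u ∈ C, ∀ v : V, v ∉ X → G.Adj u v → v ∈ C

/-- The torso `G⟦X⟧` of `X` in `G`. -/
def torso (G : SimpleGraph V) (X : Set V) : SimpleGraph X where
  Adj u v := u ≠ v ∧ (G.Adj (u : V) (v : V) ∨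
    ∃ C : Set V, IsCompOutside G X C ∧ (u : V) ∈ Nbhd G C ∧ (v : V) ∈ Nbhd G C)
  symm := by
    constructor
    rintro u v ⟨hne, h | ⟨C, hC, hu, hv⟩⟩
    · exact ⟨hne.symm, Or.inl h.symm⟩
    · exact ⟨hne.symm, Or.inr ⟨C, hC, hv, hu⟩⟩
  loopless := by
    constructor
    intro u h
    exact h.1 rfl

/-- `H` is a minor of `G`. -/
def IsMinor (H : SimpleGraph W) (G : SimpleGraph V) : Prop :=
  ∃ M : W → Set V,
    (∀ w : W, (G.induce (M w)).Connected) ∧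
    (Pairwise fun w w' : W => Disjoint (M w) (M w')) ∧
    ∀ w w' : W, H.Adj w w' → ∃ u ∈ M w, ∃ v ∈ M w', G.Adj u v

/-- `M` is a faithful model of the graph `H` (with vertex set `X ⊆ V(G)`) in `G`. -/
def FaithfulModel (G : SimpleGraph V) (X : Set V) (H : SimpleGraph X)
    (M : X → Set V) : Prop :=
  (∀ w : X, (w : V) ∈ M w) ∧
  (∀ w : X, (G.induce (M w)).Connected) ∧
  (Pairwise fun w w' : X => Disjoint (M w) (M w')) ∧
  ∀ w w' : X, H.Adj w w' → ∃ u ∈ M w, ∃ v ∈ M w', G.Adj u v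

/-- `H` (a graph with vertex set `X ⊆ V(G)`) is a faithful minor of `G`. -/
def IsFaithfulMinor (G : SimpleGraph V) (X : Set V) (H : SimpleGraph X) : Prop :=
  ∃ M : X → Set V, FaithfulModel G X H M

/-- The projection of a separation of `G` to a minor with model `M`. -/
def projSep {X : Set V} (M : X → Set V) (p : Set V × Set V × Set V) :
    Set X × Set X × Set X :=
  ({w : X | M w ⊆ p.1}, {w : X | (M w ∩ p.2.1).Nonempty}, {w : X | M w ⊆ p.2.2})

/-- The graph TH₊₃: vertices 0,1,2,3 are v₁,v₂,v₃,v₄ (pairwise adjacent); 4,5,6 are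
w₁,w₂,w₃ with w₁ ~ v₁,v₂,v₃, w₂ ~ v₁,v₂,v₄, w₃ ~ v₁,v₃,v₄. -/
def TH3 : SimpleGraph (Fin 7) :=
  SimpleGraph.fromRel (fun u v =>
    (u.val < 4 ∧ v.val < 4) ∨
    (u.val = 4 ∧ (v.val = 0 ∨ v.val = 1 ∨ v.val = 2)) ∨
    (u.val = 5 ∧ (v.val = 0 ∨ v.val = 1 ∨ v.val = 3)) ∨
    (u.val = 6 ∧ (v.val = 0 ∨ v.val = 2 ∨ v.val = 3)))

/-- The graph TR₊₃: vertices 0,1,2 are v₁,v₂,v₃ (pairwise adjacent); 3,4,5 are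
w₁,w₂,w₃, each adjacent to each of v₁,v₂,v₃. -/
def TR3 : SimpleGraph (Fin 6) :=
  SimpleGraph.fromRel (fun u v =>
    (u.val < 3 ∧ v.val < 3) ∨ (3 ≤ u.val ∧ v.val < 3))

/-- A graph is exceptional if it embeds (injectively, preserving adjacency)
into TH₊₃ or into TR₊₃. -/
def Exceptional (H : SimpleGraph W) : Prop :=
  (∃ f : W → Fin 7, Function.Injective f ∧ ∀ u v : W, H.Adj u v → TH3.Adj (f u) (f v)) ∨
  (∃ f : W → Fin 6, Function.Injective f ∧ ∀ u v : W, H.Adj u v → TR3.Adj (f u) (f v))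

/-- `X` is a `k`-inseparable set of `G`. -/
def KInseparable (G : SimpleGraph V) (k : ℕ) (X : Set V) : Prop :=
  k < X.ncard ∧
    ¬ ∃ Y S Z : Set V, IsSeparation G Y S Z ∧ S.ncard ≤ k ∧
      (X ∩ Y).Nonempty ∧ (X ∩ Z).Nonempty

/-- A triconnected region: a maximal 2-inseparable set of size ≥ 4. -/
def TriconnectedRegion (G : SimpleGraph V) (R : Set V) : Prop :=
  KInseparable G 2 R ∧ 4 ≤ R.ncard ∧ ∀ R' : Set V, R ⊂ R' → ¬ KInseparable G 2 R'

/-- `H` is a topological subgraph of `G`. -/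
def IsTopologicalSubgraph (H : SimpleGraph W) (G : SimpleGraph V) : Prop :=
  ∃ (φ : W → V) (P : ∀ u v : W, H.Adj u v → G.Walk (φ u) (φ v)),
    Function.Injective φ ∧
    (∀ u v (h : H.Adj u v), (P u v h).IsPath) ∧
    (∀ u v (h : H.Adj u v), P u v h = (P v u h.symm).reverse) ∧
    (∀ u v (h : H.Adj u v), ∀ x ∈ (P u v h).support,
      x ∈ Set.range φ → x = φ u ∨ x = φ v) ∧
    (∀ u v (h : H.Adj u v), ∀ u' v' (h' : H.Adj u' v'), s(u, v) ≠ s(u', v') →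
      ∀ x ∈ (P u v h).support, x ∈ (P u' v' h').support →
        (x = φ u ∨ x = φ v) ∧ (x = φ u' ∨ x = φ v'))

/-- A quasi-4-connected region of a 3-connected graph. -/
def Quasi4Region (G : SimpleGraph V) (R : Set V) : Prop :=
  IsFaithfulMinor G R (torso G R) ∧ Quasi4Connected (torso G R) ∧
    ∀ C : Set V, IsCompOutside G R C → (Nbhd G C).ncard = 3

/-- A split vertex of a separation (Y₀,S₀,Z₀). -/
def SplitVertex (G : SimpleGraph V) (S₀ Z₀ : Set V) (z : V) : Prop :=
  z ∈ Z₀ ∧ ∀ C : Set V, IsCompOutside G (S₀ ∪ {z}) C → (Nbhd G C).ncard = 3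

/-- The graph obtained from `G` by contracting the edge `s₁s₂` onto `s₁`. -/
def contractEdge (G : SimpleGraph V) (s₁ s₂ : V) : SimpleGraph ({s₂}ᶜ : Set V) where
  Adj u v := u ≠ v ∧ (G.Adj (u : V) (v : V) ∨
    ((u : V) = s₁ ∧ G.Adj (v : V) s₂) ∨ ((v : V) = s₁ ∧ G.Adj (u : V) s₂))
  symm := by
    constructor
    rintro u v ⟨hne, h | h | h⟩
    · exact ⟨hne.symm, Or.inl h.symm⟩
    · exact ⟨hne.symm, Or.inr (Or.inr h)⟩
    · exact ⟨hne.symm, Or.inr (Or.inl h)⟩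
  loopless := by
    constructor
    intro u h
    exact h.1 rfl

/-- `s t` are the endvertices of a crossedge of two crossing non-degenerate minimal
separations of the tangle `T`, with `s ∈ S₁` and `t ∈ S₂`. -/
def IsNondegCrossedge (G : SimpleGraph V) (T : Set (Set V × Set V × Set V))
    (s t : V) : Prop :=
  ∃ p q : Set V × Set V × Set V,
    IsMinimalIn T p ∧ IsMinimalIn T q ∧
    ¬ Degenerate G p.1 p.2.1 p.2.2 ∧ ¬ Degenerate G q.1 q.2.1 q.2.2 ∧
    ¬ SepOrthogonal p q ∧ G.Adj s t ∧ p.2.1 ∩ q.1 = {s} ∧ q.2.1 ∩ p.1 = {t}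

/-!
By maximality of `R`, every vertex `v` of a component `C` of `G - R` lies in a connected set
`D ⊆ C` with `|N(D)| ≤ 2`, namely the side away from `R` of a 2-separation splitting `R ∪ {v}`.
Since `|N(·)|` is submodular, two such sets that cross and touch have a union of the same kind,
so a maximal one is all of `C`, and `C` has at most two attachments. Then every virtual edge
of the torso can be routed through its own component, and a separation of the torso of order
`≤ 2` lifts to one of `G` with the same separator.

Conversely, a separation `(Y, S, Z)` of `G` of order `≤ 2` splitting `R` cuts the torso into
`R ∩ Y`, `R ∩ S`, `R ∩ Z` with at most `|S \ R|` torso edges between `R ∩ Y` and `R ∩ Z`, one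
through each component meeting `S`; but in a `k`-connected graph a vertex set and the number of
edges between the two sides it leaves always add up to at least `k`. Finally, a vertex outside
`R` is cut off from `R` by the at most two attachments of its component.
-/

open SimpleGraph

section Separations

variable {G : SimpleGraph V} {Y S Z : Set V}

theorem IsSeparation.symm (h : IsSeparation G Y S Z) : IsSeparation G Z S Y := by
  obtain ⟨hYS, hYZ, hSZ, hcover, hadj⟩ := h
  refine ⟨hSZ.symm, hYZ.symm, hYS.symm, ?_, fun z hz y hy hzy => hadj y hy z hz hzy.symm⟩
  rw [← hcover]
  ext x
  simp only [Set.mem_union]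
  tauto

theorem IsSeparation.mem_or_mem_or_mem (h : IsSeparation G Y S Z) (x : V) :
    x ∈ Y ∨ x ∈ S ∨ x ∈ Z := by
  have hx : x ∈ Y ∪ S ∪ Z := h.2.2.2.1 ▸ Set.mem_univ x
  simpa only [Set.mem_union, or_assoc] using hx

theorem IsSeparation.not_adj (h : IsSeparation G Y S Z) {y z : V} (hy : y ∈ Y) (hz : z ∈ Z) :
    ¬ G.Adj y z :=
  h.2.2.2.2 y hy z hz

theorem IsSeparation.mem_of_adj (h : IsSeparation G Y S Z) {u v : V} (hu : u ∈ Y) (hv : v ∉ S)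
    (huv : G.Adj u v) : v ∈ Y := by
  rcases h.mem_or_mem_or_mem v with hv' | hv' | hv'
  · exact hv'
  · exact absurd hv' hv
  · exact absurd huv (h.not_adj hu hv')

theorem isSeparation_nbhd (D : Set V) : IsSeparation G D (Nbhd G D) (D ∪ Nbhd G D)ᶜ := by
  refine ⟨Set.disjoint_left.2 fun v hv hN => hN.1 hv, ?_, ?_, Set.union_compl_self _, ?_⟩
  · exact Set.disjoint_left.2 fun v hv h => h (Or.inl hv)
  · exact Set.disjoint_left.2 fun v hv h => h (Or.inr hv)
  · exact fun y hy z hz hyz => hz (Or.inr ⟨fun h => hz (Or.inl h), y, hy, hyz⟩)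

end Separations

section Components

variable {G : SimpleGraph V} {X C : Set V}

theorem exists_adj_of_induce_connected {D P : Set V} (hD : (G.induce D).Connected)
    (hDP : (D ∩ P).Nonempty) (hDP' : ¬ D ⊆ P) : ∃ u ∈ D ∩ P, ∃ v ∈ D \ P, G.Adj u v := by
  obtain ⟨u, huD, huP⟩ := hDP
  obtain ⟨v, hvD, hvP⟩ := Set.not_subset.1 hDP'
  obtain ⟨p⟩ := hD.preconnected ⟨u, huD⟩ ⟨v, hvD⟩
  obtain ⟨d, -, hd₁, hd₂⟩ := p.exists_boundary_dart (Subtype.val ⁻¹' P) huP hvP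
  exact ⟨d.fst, ⟨d.fst.2, hd₁⟩, d.snd, ⟨d.snd.2, hd₂⟩, d.adj⟩

theorem subset_of_induce_connected {D P : Set V} (hD : (G.induce D).Connected) (hDX : D ⊆ Xᶜ)
    (hP : ∀ u ∈ P, ∀ v, v ∉ X → G.Adj u v → v ∈ P) (hDP : (D ∩ P).Nonempty) : D ⊆ P := by
  by_contra hsub
  obtain ⟨u, ⟨-, huP⟩, v, ⟨hvD, hvP⟩, huv⟩ := exists_adj_of_induce_connected hD hDP hsub
  exact hvP (hP u huP v (hDX hvD) huv)

theorem exists_isCompOutside {v : V} (hv : v ∉ X) : ∃ C, IsCompOutside G X C ∧ v ∈ C := by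
  classical
  refine ⟨{u | ∃ p : G.Walk v u, ∀ x ∈ p.support, x ∉ X}, ⟨?_, ?_, ?_⟩, .nil, by simpa⟩
  · rintro u ⟨p, hp⟩
    exact hp u p.end_mem_support
  · refine induce_connected_of_patches v ⟨.nil, by simpa⟩ fun {u} ⟨p, hp⟩ =>
      ⟨{x | x ∈ p.support}, fun x hx => ?_, p.start_mem_support, p.end_mem_support,
        p.connected_induce_support.preconnected _ _⟩
    exact ⟨p.takeUntil x hx, fun y hy => hp y (p.support_takeUntil_subset_support hx hy)⟩
  · rintro u ⟨p, hp⟩ w hw huw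
    refine ⟨p.concat huw, fun x hx => ?_⟩
    rw [Walk.support_concat, List.mem_append, List.mem_singleton] at hx
    rcases hx with hx | rfl
    exacts [hp x hx, hw]

theorem IsCompOutside.subset (hC : IsCompOutside G X C) {D : Set V}
    (hD : (G.induce D).Connected) (hDX : D ⊆ Xᶜ) (hDC : (D ∩ C).Nonempty) : D ⊆ C :=
  subset_of_induce_connected hD hDX hC.2.2 hDC

theorem IsCompOutside.eq_of_mem {C' : Set V} (hC : IsCompOutside G X C)
    (hC' : IsCompOutside G X C') {v : V} (hv : v ∈ C) (hv' : v ∈ C') : C = C' :=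
  (hC'.subset hC.2.1 hC.1 ⟨v, hv, hv'⟩).antisymm (hC.subset hC'.2.1 hC'.1 ⟨v, hv', hv⟩)

theorem IsCompOutside.nbhd_subset (hC : IsCompOutside G X C) : Nbhd G C ⊆ X := by
  rintro w ⟨hwC, u, hu, huw⟩
  by_contra hwX
  exact hwC (hC.2.2 u hu w hwX huw)

theorem exists_isPath_of_mem_nbhd (hC : (G.induce C).Connected) {a b : V}
    (ha : a ∈ Nbhd G C) (hb : b ∈ Nbhd G C) :
    ∃ p : G.Walk a b, p.IsPath ∧ ∀ x ∈ p.support, x = a ∨ x = b ∨ x ∈ C := by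
  classical
  obtain ⟨-, c, hc, hca⟩ := ha
  obtain ⟨-, d, hd, hdb⟩ := hb
  obtain ⟨q⟩ := hC.preconnected ⟨c, hc⟩ ⟨d, hd⟩
  obtain ⟨r, hr⟩ : ∃ r : G.Walk c d, ∀ y ∈ r.support, y ∈ C := by
    refine ⟨q.map (Embedding.induce C).toHom, fun y hy => ?_⟩
    erw [Walk.support_map] at hy
    obtain ⟨z, -, rfl⟩ := List.mem_map.1 hy
    exact z.2
  obtain ⟨p, hp⟩ : ∃ p : G.Walk a b, ∀ x ∈ p.support, x = a ∨ x = b ∨ x ∈ C := by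
    refine ⟨.cons hca.symm (r.concat hdb), fun x hx => ?_⟩
    simp only [Walk.support_cons, Walk.support_concat, List.mem_cons, List.mem_append,
      List.not_mem_nil, or_false] at hx
    rcases hx with rfl | hx | rfl
    · exact Or.inl rfl
    · exact Or.inr (Or.inr (hr x hx))
    · exact Or.inr (Or.inl rfl)
  exact ⟨p.bypass, p.bypass_isPath, fun x hx => hp x (p.support_bypass_subset_support hx)⟩

end Components

section Neighbourhoods

variable [Finite V] {G : SimpleGraph V}

theorem ncard_nbhd_union_add_ncard_nbhd_inter_le (D D' : Set V) :
    (Nbhd G (D ∪ D')).ncard + (Nbhd G (D ∩ D')).ncard ≤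
      (Nbhd G D).ncard + (Nbhd G D').ncard := by
  rw [← Set.ncard_union_add_ncard_inter (Nbhd G (D ∪ D')),
    ← Set.ncard_union_add_ncard_inter (Nbhd G D)]
  refine add_le_add (Set.ncard_le_ncard ?_) (Set.ncard_le_ncard ?_)
  · rintro v (⟨hv, u, hu | hu, huv⟩ | ⟨hv, u, ⟨huD, huD'⟩, huv⟩)
    · exact Or.inl ⟨fun h => hv (Or.inl h), u, hu, huv⟩
    · exact Or.inr ⟨fun h => hv (Or.inr h), u, hu, huv⟩
    · by_cases hvD : v ∈ D
      · exact Or.inr ⟨fun h => hv ⟨hvD, h⟩, u, huD', huv⟩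
      · exact Or.inl ⟨hvD, u, huD, huv⟩
  · rintro v ⟨⟨hv, -⟩, -, u, ⟨huD, huD'⟩, huv⟩
    exact ⟨⟨fun h => hv (Or.inl h), u, huD, huv⟩, ⟨fun h => hv (Or.inr h), u, huD', huv⟩⟩

theorem ncard_nbhd_union_add_two_le {D D' : Set V} (hD : (G.induce D).Connected)
    (hD' : (G.induce D').Connected) (hDD' : ¬ D ⊆ D') (hD'D : ¬ D' ⊆ D) {d d' : V}
    (hd : d ∈ D) (hd' : d' ∈ D') (hdd' : G.Adj d d') :
    (Nbhd G (D ∪ D')).ncard + 2 ≤ (Nbhd G D).ncard + (Nbhd G D').ncard := by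
  by_cases hinter : (D ∩ D').Nonempty
  · obtain ⟨u, hu, x, ⟨hxD, hxD'⟩, hux⟩ := exists_adj_of_induce_connected hD hinter hDD'
    obtain ⟨u', hu', x', ⟨-, hx'D⟩, hux'⟩ :=
      exists_adj_of_induce_connected hD' (Set.inter_comm D D' ▸ hinter) hD'D
    have hxx' : x ≠ x' := fun h => hx'D (h ▸ hxD)
    have h2 : 2 ≤ (Nbhd G (D ∩ D')).ncard := by
      rw [← Set.ncard_pair hxx']
      refine Set.ncard_le_ncard (Set.pair_subset ?_ ?_)
      · exact ⟨fun h => hxD' h.2, u, hu, hux⟩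
      · exact ⟨fun h => hx'D h.1, u', Set.inter_comm D' D ▸ hu', hux'⟩
    have := ncard_nbhd_union_add_ncard_nbhd_inter_le (G := G) D D'
    omega
  · have hdD' : d ∉ D' := fun h => hinter ⟨d, hd, h⟩
    have hd'D : d' ∉ D := fun h => hinter ⟨d', h, hd'⟩
    have hsub : Nbhd G (D ∪ D') ⊆ (Nbhd G D \ {d'}) ∪ (Nbhd G D' \ {d}) := by
      rintro v ⟨hv, u, hu | hu, huv⟩
      · exact Or.inl ⟨⟨fun h => hv (Or.inl h), u, hu, huv⟩, by rintro rfl; exact hv (Or.inr hd')⟩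
      · exact Or.inr ⟨⟨fun h => hv (Or.inr h), u, hu, huv⟩, by rintro rfl; exact hv (Or.inl hd)⟩
    have h₁ := Set.ncard_sdiff_singleton_add_one (s := Nbhd G D) ⟨hd'D, d, hd, hdd'⟩
    have h₂ := Set.ncard_sdiff_singleton_add_one (s := Nbhd G D') ⟨hdD', d', hd', hdd'.symm⟩
    have := (Set.ncard_le_ncard hsub).trans (Set.ncard_union_le _ _)
    omega

theorem ncard_nbhd_le_two_of_cover {C : Set V} (hC : (G.induce C).Connected)
    (hcov : ∀ v ∈ C, ∃ D ⊆ C, v ∈ D ∧ (G.induce D).Connected ∧ (Nbhd G D).ncard ≤ 2) :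
    (Nbhd G C).ncard ≤ 2 := by
  let F : Set (Set V) := {D | D ⊆ C ∧ (G.induce D).Connected ∧ (Nbhd G D).ncard ≤ 2}
  obtain ⟨v⟩ := hC.nonempty
  obtain ⟨D₀, hD₀C, -, hD₀⟩ := hcov v v.2
  obtain ⟨D, ⟨hDC, hD, hND⟩, hDmax⟩ := (Set.toFinite F).exists_maximal ⟨D₀, hD₀C, hD₀⟩
  by_cases hCD : C ⊆ D
  · rwa [hCD.antisymm hDC]
  obtain ⟨u⟩ := hD.nonempty
  obtain ⟨d, ⟨-, hdD⟩, x, ⟨hxC, hxD⟩, hdx⟩ :=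
    exists_adj_of_induce_connected hC ⟨u, hDC u.2, u.2⟩ hCD
  obtain ⟨D', hD'C, hxD', hD', hND'⟩ := hcov x hxC
  have hU : D ∪ D' ∈ F := by
    refine ⟨Set.union_subset hDC hD'C, connected_induce_union hD.preconnected hD'.preconnected
      hdD hxD' hdx, ?_⟩
    by_cases hDD' : D ⊆ D'
    · rwa [Set.union_eq_right.2 hDD']
    have := ncard_nbhd_union_add_two_le hD hD' hDD' (fun h => hxD (h hxD')) hdD hxD' hdx
    omega
  exact absurd (hDmax hU Set.subset_union_left (Or.inr hxD')) hxD

end Neighbourhoods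

theorem exists_walks_eq_reverse {H : SimpleGraph W} {G : SimpleGraph V} {φ : W → V}
    (Q : ∀ u v : W, G.Walk (φ u) (φ v) → Prop) (hQ : ∀ u v p, Q u v p → Q v u p.reverse)
    (hex : ∀ u v, H.Adj u v → ∃ p, Q u v p) :
    ∃ P : ∀ u v : W, H.Adj u v → G.Walk (φ u) (φ v),
      (∀ u v h, Q u v (P u v h)) ∧ ∀ u v h, P u v h = (P v u h.symm).reverse := by
  classical
  let _ : LinearOrder W := IsWellOrder.linearOrder WellOrderingRel
  choose p hp using hex
  refine ⟨fun u v h => if u < v then p u v h else (p v u h.symm).reverse, fun u v h => ?_,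
    fun u v h => ?_⟩
  · dsimp only
    split_ifs
    exacts [hp u v h, hQ v u _ (hp v u h.symm)]
  · rcases lt_trichotomy u v with huv | rfl | hvu
    · simp [huv, huv.not_gt]
    · exact absurd h (H.loopless.irrefl u)
    · simp [hvu, hvu.not_gt]

def crossEdges (H : SimpleGraph W) (A B : Set W) : Set (W × W) :=
  {p | p.1 ∈ A ∧ p.2 ∈ B ∧ H.Adj p.1 p.2}

theorem KConnected.le_ncard_add_ncard_crossEdges [Finite W] {H : SimpleGraph W} {k : ℕ}
    (hH : KConnected k H) {A M B : Set W} (hAM : Disjoint A M) (hAB : Disjoint A B)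
    (hMB : Disjoint M B) (hcover : A ∪ M ∪ B = Set.univ) (hA : A.Nonempty) (hB : B.Nonempty) :
    k ≤ M.ncard + (crossEdges H A B).ncard := by
  by_cases hall : ∀ a ∈ A, ∀ b ∈ B, H.Adj a b
  · have hcard : Nat.card W = A.ncard + M.ncard + B.ncard := by
      rw [← Set.ncard_univ, ← hcover, Set.ncard_union_eq (Set.disjoint_union_left.2 ⟨hAB, hMB⟩),
        Set.ncard_union_eq hAM]
    have hprod : A.ncard * B.ncard ≤ (crossEdges H A B).ncard := by
      rw [← Set.ncard_prod]
      exact Set.ncard_le_ncard fun p ⟨ha, hb⟩ => ⟨ha, hb, hall _ ha _ hb⟩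
    have hk := hH.1
    have hA1 := (Set.ncard_pos).2 hA
    have hB1 := (Set.ncard_pos).2 hB
    -- `|A| |B| ≥ |A| + |B| - 1`
    nlinarith
  classical
  push Not at hall
  obtain ⟨a, ha, b, hb, hab⟩ := hall
  -- cover every crossing edge by an endpoint other than `a` and `b`
  let X := (fun p : W × W => if p.1 = a then p.2 else p.1) '' crossEdges H A B
  have hX : ∀ p ∈ crossEdges H A B, p.1 ∈ X ∨ p.2 ∈ X := by
    intro p hp
    by_cases hpa : p.1 = a
    · exact Or.inr ⟨p, hp, if_pos hpa⟩
    · exact Or.inl ⟨p, hp, if_neg hpa⟩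
  have haX : a ∉ X := by
    rintro ⟨p, ⟨hp₁, hp₂, -⟩, hpa⟩
    dsimp only at hpa
    split_ifs at hpa with h
    · exact Set.disjoint_left.1 hAB ha (hpa ▸ hp₂)
    · exact h hpa
  have hbX : b ∉ X := by
    rintro ⟨p, ⟨hp₁, hp₂, hp⟩, hpb⟩
    dsimp only at hpb
    split_ifs at hpb with h
    · exact hab (h ▸ hpb ▸ hp)
    · exact Set.disjoint_left.1 hAB hp₁ (hpb ▸ hb)
  have hsep : IsSeparation H (A \ X) (M ∪ X) (B \ X) := by
    refine ⟨?_, ?_, ?_, ?_, ?_⟩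
    · exact Set.disjoint_union_right.2 ⟨hAM.mono_left Set.sdiff_subset, Set.disjoint_sdiff_left⟩
    · exact hAB.mono Set.sdiff_subset Set.sdiff_subset
    · exact Set.disjoint_union_left.2 ⟨hMB.mono_right Set.sdiff_subset, Set.disjoint_sdiff_right⟩
    · rw [Set.eq_univ_iff_forall]
      intro v
      have hv : v ∈ A ∪ M ∪ B := hcover ▸ Set.mem_univ v
      by_cases hvX : v ∈ X
      · exact Or.inl (Or.inr (Or.inr hvX))
      · rcases hv with (hv | hv) | hv
        · exact Or.inl (Or.inl ⟨hv, hvX⟩)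
        · exact Or.inl (Or.inr (Or.inl hv))
        · exact Or.inr ⟨hv, hvX⟩
    · rintro u ⟨huA, huX⟩ v ⟨hvB, hvX⟩ huv
      rcases hX (u, v) ⟨huA, hvB, huv⟩ with h | h
      exacts [huX h, hvX h]
  calc k ≤ (M ∪ X).ncard := hH.2 _ _ _ hsep ⟨a, ha, haX⟩ ⟨b, hb, hbX⟩
    _ ≤ M.ncard + X.ncard := Set.ncard_union_le M X
    _ ≤ M.ncard + (crossEdges H A B).ncard := Nat.add_le_add_left (Set.ncard_image_le) _

section Torso

variable {G : SimpleGraph V} {R : Set V}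

theorem IsSeparation.exists_lift_of_torso {Y₀ S₀ Z₀ : Set R}
    (h : IsSeparation (torso G R) Y₀ S₀ Z₀) :
    ∃ Y Z : Set V, IsSeparation G Y ((↑) '' S₀) Z ∧ (↑) '' Y₀ ⊆ Y ∧ (↑) '' Z₀ ⊆ Z := by
  let Y : Set V := (↑) '' Y₀ ∪
    {v | v ∉ R ∧ ∃ C, IsCompOutside G R C ∧ v ∈ C ∧ ∃ y ∈ Y₀, (y : V) ∈ Nbhd G C}
  have hY₀ : ∀ r : R, (r : V) ∈ Y → r ∈ Y₀ := by
    rintro r (⟨y, hy, hyr⟩ | ⟨hr, -⟩)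
    · exact Subtype.val_injective hyr ▸ hy
    · exact absurd r.2 hr
  refine ⟨Y, (Y ∪ (↑) '' S₀)ᶜ, ⟨?_, ?_, ?_, Set.union_compl_self _, ?_⟩, Set.subset_union_left, ?_⟩
  · refine Set.disjoint_union_left.2 ⟨(Set.disjoint_image_iff Subtype.val_injective).2 h.1, ?_⟩
    exact Set.disjoint_left.2 fun v hv ⟨r, _, hrv⟩ => hv.1 (hrv ▸ r.2)
  · exact Set.disjoint_left.2 fun v hv h => h (Or.inl hv)
  · exact Set.disjoint_left.2 fun v hv h => h (Or.inr hv)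
  · rintro y hy z hz hyz
    have hzY : z ∉ Y := fun h => hz (Or.inl h)
    by_cases hzR : z ∈ R
    · have hz₀ : (⟨z, hzR⟩ : R) ∈ Z₀ := by
        rcases h.mem_or_mem_or_mem ⟨z, hzR⟩ with h' | h' | h'
        · exact absurd (Or.inl ⟨_, h', rfl⟩) hzY
        · exact absurd (Or.inr ⟨_, h', rfl⟩) hz
        · exact h'
      rcases hy with ⟨y, hy₀, rfl⟩ | ⟨hyR, C, hC, hyC, r, hr, hrC⟩
      · exact h.not_adj hy₀ hz₀ ⟨fun h' => hyz.ne (congrArg Subtype.val h'), Or.inl hyz⟩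
      · refine h.not_adj hr hz₀ ⟨fun h' => hzY ?_, Or.inr ⟨C, hC, hrC, ?_⟩⟩
        · exact Or.inl ⟨r, hr, congrArg Subtype.val h'⟩
        · exact ⟨fun h' => hC.1 h' hzR, y, hyC, hyz⟩
    · refine hzY (Or.inr ⟨hzR, ?_⟩)
      rcases hy with ⟨y, hy₀, rfl⟩ | ⟨-, C, hC, hyC, hr⟩
      · obtain ⟨C, hC, hzC⟩ := exists_isCompOutside (G := G) hzR
        exact ⟨C, hC, hzC, y, hy₀, fun h' => hC.1 h' y.2, z, hzC, hyz.symm⟩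
      · exact ⟨C, hC, hC.2.2 y hyC z hzR hyz, hr⟩
  · rintro _ ⟨z, hz, rfl⟩ (hzY | ⟨r, hr, hrz⟩)
    · exact Set.disjoint_left.1 h.2.1 (hY₀ z hzY) hz
    · exact Set.disjoint_left.1 h.2.2.1 (Subtype.val_injective hrz ▸ hr) hz

theorem kConnected_torso (hR : KInseparable G 2 R) (h4 : 4 ≤ R.ncard) :
    KConnected 3 (torso G R) := by
  refine ⟨by rw [Nat.card_coe_set_eq]; omega, fun Y₀ S₀ Z₀ hsep ⟨y, hy⟩ ⟨z, hz⟩ => ?_⟩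
  by_contra! hS₀
  obtain ⟨Y, Z, hsep', hY, hZ⟩ := hsep.exists_lift_of_torso
  refine hR.2 ⟨Y, _, Z, hsep', ?_, ⟨y, y.2, hY ⟨y, hy, rfl⟩⟩, ⟨z, z.2, hZ ⟨z, hz, rfl⟩⟩⟩
  rw [Set.ncard_image_of_injective _ Subtype.val_injective]
  omega

theorem isTopologicalSubgraph_torso [Finite V]
    (hA : ∀ C : Set V, IsCompOutside G R C → (Nbhd G C).ncard ≤ 2) :
    IsTopologicalSubgraph (torso G R) G := by
  let Q : ∀ u v : R, G.Walk u v → Prop := fun u v p => p.IsPath ∧ ∀ x ∈ p.support,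
    x = u ∨ x = v ∨ ∃ C, IsCompOutside G R C ∧ x ∈ C ∧ Nbhd G C = {(u : V), (v : V)}
  have hQ : ∀ u v p, Q u v p → Q v u p.reverse := by
    rintro u v p ⟨hp, hsupp⟩
    refine ⟨hp.reverse, fun x hx => ?_⟩
    rw [Walk.support_reverse, List.mem_reverse] at hx
    rcases hsupp x hx with h | h | ⟨C, hC, hxC, hNC⟩
    · exact Or.inr (Or.inl h)
    · exact Or.inl h
    · exact Or.inr (Or.inr ⟨C, hC, hxC, hNC.trans (Set.pair_comm _ _)⟩)
  have hex : ∀ u v, (torso G R).Adj u v → ∃ p, Q u v p := by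
    rintro u v ⟨hne, hadj | ⟨C, hC, huC, hvC⟩⟩
    · refine ⟨hadj.toWalk, ?_, fun x hx => ?_⟩
      · simpa using hadj.ne
      · simp only [Adj.toWalk, Walk.support_cons, Walk.support_nil, List.mem_cons,
          List.not_mem_nil, or_false] at hx
        rcases hx with rfl | rfl
        exacts [Or.inl rfl, Or.inr (Or.inl rfl)]
    · have hNC : Nbhd G C = {(u : V), (v : V)} := by
        refine (Set.eq_of_subset_of_ncard_le (Set.pair_subset huC hvC) ?_).symm
        rw [Set.ncard_pair fun h => hne (Subtype.ext h)]
        exact hA C hC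
      obtain ⟨p, hp, hsupp⟩ := exists_isPath_of_mem_nbhd hC.2.1 huC hvC
      refine ⟨p, hp, fun x hx => ?_⟩
      rcases hsupp x hx with h | h | h
      exacts [Or.inl h, Or.inr (Or.inl h), Or.inr (Or.inr ⟨C, hC, h, hNC⟩)]
  obtain ⟨P, hPQ, hPrev⟩ := exists_walks_eq_reverse Q hQ hex
  have hin : ∀ {u v : R} (h : (torso G R).Adj u v), ∀ x ∈ (P u v h).support, x ∈ R →
      x = u ∨ x = v := by
    intro u v h x hx hxR
    rcases (hPQ u v h).2 x hx with h | h | ⟨C, hC, hxC, -⟩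
    exacts [Or.inl h, Or.inr h, absurd hxR (hC.1 hxC)]
  have hout : ∀ {u v : R} (h : (torso G R).Adj u v), ∀ x ∈ (P u v h).support, x ∉ R →
      ∃ C, IsCompOutside G R C ∧ x ∈ C ∧ Nbhd G C = {(u : V), (v : V)} := by
    intro u v h x hx hxR
    rcases (hPQ u v h).2 x hx with rfl | rfl | hC
    exacts [absurd u.2 hxR, absurd v.2 hxR, hC]
  refine ⟨(↑), P, Subtype.val_injective, fun u v h => (hPQ u v h).1, hPrev,
    fun u v h x hx ⟨r, hr⟩ => hin h x hx (hr ▸ r.2), fun u v h u' v' h' hne x hx hx' => ?_⟩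
  by_cases hxR : x ∈ R
  · exact ⟨hin h x hx hxR, hin h' x hx' hxR⟩
  obtain ⟨C, hC, hxC, hNC⟩ := hout h x hx hxR
  obtain ⟨C', hC', hxC', hNC'⟩ := hout h' x hx' hxR
  rw [hC.eq_of_mem hC' hxC hxC', hNC'] at hNC
  refine absurd (Sym2.eq_iff.2 ?_) hne
  rcases Set.pair_eq_pair_iff.1 hNC with ⟨h₁, h₂⟩ | ⟨h₁, h₂⟩
  · exact Or.inl ⟨Subtype.ext h₁.symm, Subtype.ext h₂.symm⟩
  · exact Or.inr ⟨Subtype.ext h₂.symm, Subtype.ext h₁.symm⟩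

end Torso

section Regions

variable [Finite V] {G : SimpleGraph V} {R : Set V}

theorem exists_connected_of_not_kInseparable_insert (hR : KInseparable G 2 R) {v : V}
    (hv : v ∉ R) (hRv : ¬ KInseparable G 2 (insert v R)) :
    ∃ D, v ∈ D ∧ D ⊆ Rᶜ ∧ (G.induce D).Connected ∧ (Nbhd G D).ncard ≤ 2 := by
  obtain ⟨Y, S, Z, hsep, hS, hY, hZ⟩ : ∃ Y S Z : Set V, IsSeparation G Y S Z ∧ S.ncard ≤ 2 ∧
      (insert v R ∩ Y).Nonempty ∧ (insert v R ∩ Z).Nonempty := by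
    by_contra h
    exact hRv ⟨hR.1.trans_le (Set.ncard_le_ncard (Set.subset_insert v R)), h⟩
  suffices key : ∀ Y Z, IsSeparation G Y S Z → R ∩ Z = ∅ → (insert v R ∩ Z).Nonempty →
      ∃ D, v ∈ D ∧ D ⊆ Rᶜ ∧ (G.induce D).Connected ∧ (Nbhd G D).ncard ≤ 2 by
    by_cases hRZ : (R ∩ Z).Nonempty
    · refine key Z Y hsep.symm (Set.not_nonempty_iff_eq_empty.1 fun hRY => ?_) hY
      exact hR.2 ⟨Y, S, Z, hsep, hS, hRY, hRZ⟩
    · exact key Y Z hsep (Set.not_nonempty_iff_eq_empty.1 hRZ) hZ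
  intro Y Z hsep hRZ hZ
  have hvZ : v ∈ Z := by
    obtain ⟨w, rfl | hwR, hwZ⟩ := hZ
    · exact hwZ
    · exact absurd (Set.mem_inter hwR hwZ) (hRZ ▸ Set.notMem_empty w)
  obtain ⟨D, hD, hvD⟩ := exists_isCompOutside (G := G) (Set.disjoint_right.1 hsep.2.2.1 hvZ)
  have hDZ : D ⊆ Z := subset_of_induce_connected hD.2.1 hD.1
    (fun u hu w hw huw => hsep.symm.mem_of_adj hu hw huw) ⟨v, hvD, hvZ⟩
  refine ⟨D, hvD, fun w hw hwR => ?_, hD.2.1, (Set.ncard_le_ncard hD.nbhd_subset).trans hS⟩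
  exact absurd (Set.mem_inter hwR (hDZ hw)) (hRZ ▸ Set.notMem_empty w)

theorem TriconnectedRegion.ncard_nbhd_le_two (hR : TriconnectedRegion G R) {C : Set V}
    (hC : IsCompOutside G R C) : (Nbhd G C).ncard ≤ 2 := by
  refine ncard_nbhd_le_two_of_cover hC.2.1 fun v hv => ?_
  obtain ⟨D, hvD, hDR, hD, hND⟩ := exists_connected_of_not_kInseparable_insert hR.1 (hC.1 hv)
    (hR.2.2 _ (Set.ssubset_insert (hC.1 hv)))
  exact ⟨D, hC.subset hD hDR ⟨v, hvD, hv⟩, hvD, hD, hND⟩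

theorem exists_mem_sdiff_of_mem_crossEdges_torso {Y S Z : Set V} (hsep : IsSeparation G Y S Z)
    (hA : ∀ C : Set V, IsCompOutside G R C → (Nbhd G C).ncard ≤ 2) {a b : R}
    (hab : (a, b) ∈ crossEdges (torso G R) ((↑) ⁻¹' Y) ((↑) ⁻¹' Z)) :
    ∃ s ∈ S \ R, ∃ C, IsCompOutside G R C ∧ s ∈ C ∧ Nbhd G C = {(a : V), (b : V)} := by
  obtain ⟨haY, hbZ, hne, hadj | ⟨C, hC, haC, hbC⟩⟩ := hab
  · exact absurd hadj (hsep.not_adj haY hbZ)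
  have hNC : Nbhd G C = {(a : V), (b : V)} := by
    refine (Set.eq_of_subset_of_ncard_le (Set.pair_subset haC hbC) ?_).symm
    rw [Set.ncard_pair fun h => hne (Subtype.ext h)]
    exact hA C hC
  obtain ⟨s, hsC, hsS⟩ : (C ∩ S).Nonempty := by
    by_contra hCS
    have hCS : C ⊆ Sᶜ := fun v hvC hvS => hCS ⟨v, hvC, hvS⟩
    obtain ⟨-, c, hc, hca⟩ := haC
    obtain ⟨-, d, hd, hdb⟩ := hbC
    have hCY : C ⊆ Y := subset_of_induce_connected hC.2.1 hCS
      (fun u hu w hw huw => hsep.mem_of_adj hu hw huw)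
      ⟨c, hc, hsep.mem_of_adj haY (hCS hc) hca.symm⟩
    exact hsep.not_adj (hCY hd) hbZ hdb
  exact ⟨s, ⟨hsS, hC.1 hsC⟩, C, hC, hsC, hNC⟩

theorem ncard_crossEdges_torso_le {Y S Z : Set V} (hsep : IsSeparation G Y S Z)
    (hA : ∀ C : Set V, IsCompOutside G R C → (Nbhd G C).ncard ≤ 2) :
    (crossEdges (torso G R) ((↑) ⁻¹' Y) ((↑) ⁻¹' Z)).ncard ≤ (S \ R).ncard := by
  have hex : ∀ p : R × R, ∃ s, p ∈ crossEdges (torso G R) ((↑) ⁻¹' Y) ((↑) ⁻¹' Z) →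
      s ∈ S \ R ∧ ∃ C, IsCompOutside G R C ∧ s ∈ C ∧ Nbhd G C = {(p.1 : V), (p.2 : V)} := by
    intro p
    by_cases hp : p ∈ crossEdges (torso G R) ((↑) ⁻¹' Y) ((↑) ⁻¹' Z)
    · obtain ⟨s, hs, hC⟩ := exists_mem_sdiff_of_mem_crossEdges_torso hsep hA hp
      exact ⟨s, fun _ => ⟨hs, hC⟩⟩
    · exact ⟨p.1, fun h => absurd h hp⟩
  choose f hf using hex
  refine Set.ncard_le_ncard_of_injOn f (fun p hp => (hf p hp).1) fun p hp q hq hpq => ?_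
  obtain ⟨-, C, hC, hpC, hNC⟩ := hf p hp
  obtain ⟨-, C', hC', hqC', hNC'⟩ := hf q hq
  rw [hpq] at hpC
  rw [hC.eq_of_mem hC' hpC hqC', hNC'] at hNC
  rcases Set.pair_eq_pair_iff.1 hNC with ⟨h₁, h₂⟩ | ⟨h₁, -⟩
  · exact Prod.ext (Subtype.ext h₁.symm) (Subtype.ext h₂.symm)
  · exact absurd (h₁ ▸ hq.1 : (p.2 : V) ∈ Y) (Set.disjoint_right.1 hsep.2.1 hp.2.1)

theorem kInseparable_of_kConnected_torso (h3 : KConnected 3 (torso G R))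
    (hA : ∀ C : Set V, IsCompOutside G R C → (Nbhd G C).ncard ≤ 2) : KInseparable G 2 R := by
  have hR : 3 < R.ncard := by simpa only [Nat.card_coe_set_eq] using h3.1
  refine ⟨by omega, ?_⟩
  rintro ⟨Y, S, Z, hsep, hS, ⟨y, hyR, hyY⟩, ⟨z, hzR, hzZ⟩⟩
  have hcross := h3.le_ncard_add_ncard_crossEdges (hsep.1.preimage ((↑) : R → V))
    (hsep.2.1.preimage _) (hsep.2.2.1.preimage _)
    (by rw [← Set.preimage_union, ← Set.preimage_union, hsep.2.2.2.1, Set.preimage_univ])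
    ⟨⟨y, hyR⟩, hyY⟩ ⟨⟨z, hzR⟩, hzZ⟩
  have hRS : ((↑) ⁻¹' S : Set R).ncard = (S ∩ R).ncard := by
    rw [← Set.ncard_image_of_injective _ Subtype.val_injective, Subtype.image_preimage_coe,
      Set.inter_comm]
  have hSR := ncard_crossEdges_torso_le hsep hA
  have hS' := Set.ncard_inter_add_ncard_sdiff_eq_ncard S R
  omega

theorem not_kInseparable_of_ssubset
    (hA : ∀ C : Set V, IsCompOutside G R C → (Nbhd G C).ncard ≤ 2) (hR : 2 < R.ncard)
    {R' : Set V} (hRR' : R ⊂ R') : ¬ KInseparable G 2 R' := by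
  rintro ⟨-, hR'⟩
  obtain ⟨x, hxR', hxR⟩ := Set.exists_of_ssubset hRR'
  obtain ⟨C, hC, hxC⟩ := exists_isCompOutside (G := G) hxR
  obtain ⟨r, hrR, hrN⟩ : (R \ Nbhd G C).Nonempty := by
    refine Set.nonempty_of_not_subset fun hsub => ?_
    have := (Set.ncard_le_ncard hsub).trans (hA C hC)
    omega
  refine hR' ⟨C, _, _, isSeparation_nbhd C, hA C hC, ⟨x, hxR', hxC⟩, ⟨r, hRR'.1 hrR, ?_⟩⟩
  rintro (hrC | hrN')
  exacts [hC.1 hrC hrR, hrN hrN']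

end Regions

theorem statement7 {V : Type*} [Fintype V] (G : SimpleGraph V) (R : Set V) :
    TriconnectedRegion G R ↔
      (KConnected 3 (torso G R) ∧ IsTopologicalSubgraph (torso G R) G ∧
        ∀ C : Set V, IsCompOutside G R C → (Nbhd G C).ncard ≤ 2) := by
  constructor
  · intro hR
    have hA : ∀ C, IsCompOutside G R C → (Nbhd G C).ncard ≤ 2 := fun C => hR.ncard_nbhd_le_two
    exact ⟨kConnected_torso hR.1 hR.2.1, isTopologicalSubgraph_torso hA, hA⟩
  · rintro ⟨h3, -, hA⟩
    have hR : 3 < R.ncard := by simpa only [Nat.card_coe_set_eq] using h3.1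
    exact ⟨kInseparable_of_kConnected_torso h3 hA, hR,
      fun R' => not_kInseparable_of_ssubset hA (by omega)⟩
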